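/- Let L > 0 and let Q = [−L, L] × [−L, L] ⊂ ℝ². Let γ₀, γ₁ > 0, let γ : ℝ² → ℝ be continuous and strictly positive on Q, and let u, v : ℝ² → ℝ be continuously differentiable on a neighborhood of Q with ∂ₓu(z) = γ(z)·∂_yv(z) and ∂_yu(z) = −γ(z)·∂ₓv(z) for all z in Q. Suppose the boundary conditions v(x, −L) = 0 and v(x, L) = v₀ for all x in [−L, L], and u(−L, y) = 0 and u(L, y) = u₀ for all y in [−L, L], hold with u₀, v₀ ≠ 0. Define the total conductivities Γ⁺ = (1/v₀)·∫_{−L}^{L} γ(x, L)·∂_yv(x, L) dx and Γ⁻ = (1/u₀)·∫_{−L}^{L} (γ₀γ₁/γ(L, y))·∂ₓu(L, y) dy. Then Γ⁺·Γ⁻ = γ₀·γ₁. -/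

import Mathlib

open MeasureTheory intervalIntegral

/-! Both conductivities are fluxes of a gradient through an edge of the box. The conjugacy
relation `∂ₓu = γ ∂_y v` turns the current `γ ∂_y v` through the top edge into `∂ₓu`, whose
integral is `u(L, L) - u(-L, L) = u₀`; dually `(γ₀γ₁/γ) ∂ₓu = γ₀γ₁ ∂_y v` on the right edge
integrates to `γ₀γ₁ v₀`. Hence `Γ⁺ = u₀ / v₀` and `Γ⁻ = γ₀γ₁ v₀ / u₀`. -/

section LineIntegral

variable {E F : Type*} [NormedAddCommGroup E] [NormedSpace ℝ E]
  [NormedAddCommGroup F] [NormedSpace ℝ F] [CompleteSpace F]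

theorem integral_fderiv_apply_of_hasDerivAt {f : E → F} {V : Set E} (hV : IsOpen V)
    (hf : ContDiffOn ℝ 1 f V) {c : ℝ → E} {w : E} (hc : ∀ t, HasDerivAt c w t) {a b : ℝ}
    (hcV : ∀ t ∈ Set.uIcc a b, c t ∈ V) :
    ∫ t in a..b, fderiv ℝ f (c t) w = f (c b) - f (c a) := by
  have hfc : ∀ t ∈ Set.uIcc a b, HasDerivAt (f ∘ c) (fderiv ℝ f (c t) w) t := fun t ht =>
    (((hf.differentiableOn one_ne_zero).differentiableAt
      (hV.mem_nhds (hcV t ht))).hasFDerivAt).comp_hasDerivAt t (hc t)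
  have hcont : ContinuousOn (fun t => fderiv ℝ f (c t) w) (Set.uIcc a b) :=
    ((hf.continuousOn_fderiv_of_isOpen hV le_rfl).comp
      (continuous_iff_continuousAt.2 fun t => (hc t).continuousAt).continuousOn hcV).clm_apply
      continuousOn_const
  exact integral_eq_sub_of_hasDerivAt hfc hcont.intervalIntegrable

end LineIntegral

theorem keller_dykhne_reciprocity_general (L : ℝ) (hL : 0 < L)
    (γ₀ γ₁ : ℝ)
    (γ : ℝ × ℝ → ℝ)
    (hγpos : ∀ z ∈ Set.Icc ((-L, -L) : ℝ × ℝ) (L, L), 0 < γ z)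
    (u v : ℝ × ℝ → ℝ) (V : Set (ℝ × ℝ)) (hV : IsOpen V)
    (hQV : Set.Icc ((-L, -L) : ℝ × ℝ) (L, L) ⊆ V)
    (hu : ContDiffOn ℝ 1 u V) (hv : ContDiffOn ℝ 1 v V)
    (hx : ∀ z ∈ Set.Icc ((-L, -L) : ℝ × ℝ) (L, L),
      fderiv ℝ u z (1, 0) = γ z * fderiv ℝ v z (0, 1))
    (u₀ v₀ : ℝ) (hu₀ : u₀ ≠ 0) (hv₀ : v₀ ≠ 0)
    (hvbot : ∀ x ∈ Set.Icc (-L) L, v (x, -L) = 0)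
    (hvtop : ∀ x ∈ Set.Icc (-L) L, v (x, L) = v₀)
    (huleft : ∀ y ∈ Set.Icc (-L) L, u (-L, y) = 0)
    (huright : ∀ y ∈ Set.Icc (-L) L, u (L, y) = u₀) :
    ((1 / v₀) * ∫ x in (-L)..L, γ (x, L) * fderiv ℝ v (x, L) (0, 1)) *
        ((1 / u₀) * ∫ y in (-L)..L, (γ₀ * γ₁ / γ (L, y)) * fderiv ℝ u (L, y) (1, 0)) =
      γ₀ * γ₁ := by
  have hLL : -L ≤ L := by linarith
  have hL_mem : L ∈ Set.Icc (-L) L := Set.right_mem_Icc.2 hLL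
  have hedge : Set.uIcc (-L) L = Set.Icc (-L) L := Set.uIcc_of_le hLL
  have htop : ∀ x ∈ Set.uIcc (-L) L, (x, L) ∈ Set.Icc ((-L, -L) : ℝ × ℝ) (L, L) :=
    fun x hx' => Set.Icc_prod_Icc (-L) L (-L) L ▸ Set.mk_mem_prod (hedge ▸ hx') hL_mem
  have hright : ∀ y ∈ Set.uIcc (-L) L, (L, y) ∈ Set.Icc ((-L, -L) : ℝ × ℝ) (L, L) :=
    fun y hy' => Set.Icc_prod_Icc (-L) L (-L) L ▸ Set.mk_mem_prod hL_mem (hedge ▸ hy')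
  have hΓtop : ∫ x in (-L)..L, γ (x, L) * fderiv ℝ v (x, L) (0, 1) = u₀ := by
    rw [integral_congr fun x hx' => (hx _ (htop x hx')).symm]
    refine (integral_fderiv_apply_of_hasDerivAt hV hu
      (fun x => (hasDerivAt_id' x).prodMk (hasDerivAt_const x L))
      fun x hx' => hQV (htop x hx')).trans ?_
    simp only [huright L hL_mem, huleft L hL_mem, sub_zero]
  have hΓright : ∫ y in (-L)..L, (γ₀ * γ₁ / γ (L, y)) * fderiv ℝ u (L, y) (1, 0) =
      γ₀ * γ₁ * v₀ := by
    have hcurrent : ∀ y ∈ Set.uIcc (-L) L, (γ₀ * γ₁ / γ (L, y)) * fderiv ℝ u (L, y) (1, 0) =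
        γ₀ * γ₁ * fderiv ℝ v (L, y) (0, 1) := fun y hy' => by
      rw [hx _ (hright y hy')]
      field_simp [(hγpos _ (hright y hy')).ne']
    rw [integral_congr hcurrent, intervalIntegral.integral_const_mul]
    refine congrArg _ ((integral_fderiv_apply_of_hasDerivAt hV hv
      (fun y => (hasDerivAt_const y L).prodMk (hasDerivAt_id' y))
      fun y hy' => hQV (hright y hy')).trans ?_)
    simp only [hvtop L hL_mem, hvbot L hL_mem, sub_zero]
  rw [hΓtop, hΓright]
  field_simp

/-- The Keller–Dykhne reciprocity law (classical form): if `u` is the γ-harmonic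
conjugate of the OS-type potential `v` on the box `Q = [−L,L]²`, with the stated
Dirichlet boundary data, then the product of the OS-type total conductivity `Γ⁺`
(normal current through the top edge) and the VS-type total conductivity `Γ⁻`
(dual current through the right edge) equals `γ₀·γ₁`. -/
theorem keller_dykhne_reciprocity (L : ℝ) (hL : 0 < L)
    (γ₀ γ₁ : ℝ) (h0 : 0 < γ₀) (h1 : 0 < γ₁)
    (γ : ℝ × ℝ → ℝ)
    (hγc : ContinuousOn γ (Set.Icc ((-L, -L) : ℝ × ℝ) (L, L)))
    (hγpos : ∀ z ∈ Set.Icc ((-L, -L) : ℝ × ℝ) (L, L), 0 < γ z)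
    (u v : ℝ × ℝ → ℝ) (V : Set (ℝ × ℝ)) (hV : IsOpen V)
    (hQV : Set.Icc ((-L, -L) : ℝ × ℝ) (L, L) ⊆ V)
    (hu : ContDiffOn ℝ 1 u V) (hv : ContDiffOn ℝ 1 v V)
    (hx : ∀ z ∈ Set.Icc ((-L, -L) : ℝ × ℝ) (L, L),
      fderiv ℝ u z (1, 0) = γ z * fderiv ℝ v z (0, 1))
    (hy : ∀ z ∈ Set.Icc ((-L, -L) : ℝ × ℝ) (L, L),
      fderiv ℝ u z (0, 1) = -(γ z) * fderiv ℝ v z (1, 0))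
    (u₀ v₀ : ℝ) (hu₀ : u₀ ≠ 0) (hv₀ : v₀ ≠ 0)
    (hvbot : ∀ x ∈ Set.Icc (-L) L, v (x, -L) = 0)
    (hvtop : ∀ x ∈ Set.Icc (-L) L, v (x, L) = v₀)
    (huleft : ∀ y ∈ Set.Icc (-L) L, u (-L, y) = 0)
    (huright : ∀ y ∈ Set.Icc (-L) L, u (L, y) = u₀) :
    ((1 / v₀) * ∫ x in (-L)..L, γ (x, L) * fderiv ℝ v (x, L) (0, 1)) *
        ((1 / u₀) * ∫ y in (-L)..L, (γ₀ * γ₁ / γ (L, y)) * fderiv ℝ u (L, y) (1, 0)) =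
      γ₀ * γ₁ :=
  keller_dykhne_reciprocity_general L hL γ₀ γ₁ γ hγpos u v V hV hQV hu hv hx u₀ v₀ hu₀ hv₀ hvbot
    hvtop huleft huright
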